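/- Let S be the gluing of affine semigroups S_1 and S_2 with G(S_1) ∩ G(S_2) = dℤ. Then d has a unique presentation as an element of S (i.e., exactly two factorizations, with disjoint supports) if and only if d - a ∉ S for every a ∈ Betti(S_1) ∪ Betti(S_2). -/

import Mathlib

/-! Assume `d` is uniquely presented, with fiber `{u, v}`. Were `d - a = φ(t) ∈ S` for some Betti
element `a` of `S₁` with `R`-inequivalent factorizations `x, y`, then `x + t`, `y + t` and a
factorization of `d` through `A₂` alone would be three distinct factorizations of `d` (the last is
disjoint from `x` and `y`, which are nonzero since `S` is reduced).

Conversely, two distinct factorizations in `Sᵢ` of the same element descend, by cancelling common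
generators along an `R`-chain, to a Betti element of `Sᵢ` below them; so if no Betti element lies
below `d`, `d` has exactly one factorization `pᵢ` in each `Sᵢ`. A factorization `(w₁, w₂)` of `d` in
`S` has `φ(w₁) = d - φ(w₂) ∈ G(S₁) ∩ G(S₂) = dℤ`, and reducedness of `S` forces `w₁ = 0` or
`w₂ = 0`, so the fiber is `{(p₁, 0), (0, p₂)}`. -/

open Finset

variable {M : Type*} [AddCommMonoid M] {r : ℕ}

/-- The factorization homomorphism associated to the generating tuple `A`. -/
def phi (A : Fin r → M) (u : Fin r → ℕ) : M := ∑ i, u i • A i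

/-- One step of the relation `R`: two factorizations of `a` with nonzero dot product. -/
def step (A : Fin r → M) (a : M) (u v : Fin r → ℕ) : Prop :=
  phi A u = a ∧ phi A v = a ∧ (∑ i, u i * v i) ≠ 0

/-- The relation `R` on the fiber of `a`: connected by a chain of factorizations with
consecutive nonzero dot products. -/
def Rrel (A : Fin r → M) (a : M) : (Fin r → ℕ) → (Fin r → ℕ) → Prop :=
  Relation.ReflTransGen (step A a)

/-- `a` is a Betti element: its fiber has more than one `R`-class. -/
def IsBetti (A : Fin r → M) (a : M) : Prop :=
  ∃ u v : Fin r → ℕ, phi A u = a ∧ phi A v = a ∧ ¬ Rrel A a u v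

/-- `a` is Betti-minimal: a Betti element minimal with respect to `b ≺ a ↔ a - b ∈ S`. -/
def BettiMinimal (A : Fin r → M) (a : M) : Prop :=
  IsBetti A a ∧ ∀ b : M, IsBetti A b → (∃ c : M, a = b + c) → b = a

/-- `a` has a unique presentation: exactly two factorizations, with disjoint support. -/
def HasUniquePres (A : Fin r → M) (a : M) : Prop :=
  ∃ u v : Fin r → ℕ, u ≠ v ∧ {w : Fin r → ℕ | phi A w = a} = {u, v} ∧
    (∑ i, u i * v i) = 0

/-- The monoid generated by `A` is uniquely presented: every Betti element has exactly two
factorizations, with disjoint support. -/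
def UniquelyPresented (A : Fin r → M) : Prop :=
  ∀ a : M, IsBetti A a → HasUniquePres A a

theorem mem_closure_range_iff_exists_phi (A : Fin r → M) (x : M) :
    x ∈ AddSubmonoid.closure (Set.range A) ↔ ∃ u, phi A u = x := by
  rw [← Submodule.span_nat_eq_addSubmonoidClosure, Submodule.mem_toAddSubmonoid,
    Submodule.mem_span_range_iff_exists_fun]
  rfl

theorem phi_zero (A : Fin r → M) : phi A 0 = 0 := by simp [phi]

theorem phi_add (A : Fin r → M) (u v : Fin r → ℕ) : phi A (u + v) = phi A u + phi A v := by
  simp [phi, add_nsmul, Finset.sum_add_distrib]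

theorem phi_single (A : Fin r → M) (i : Fin r) : phi A (Pi.single i 1) = A i := by
  classical
  simp [phi, Pi.single_apply, ite_smul]

theorem phi_mem {S : Type*} [SetLike S M] [AddSubmonoidClass S M] {s : S} {A : Fin r → M}
    (hA : Set.range A ⊆ s) (u : Fin r → ℕ) : phi A u ∈ s :=
  sum_mem fun i _ => nsmul_mem (hA ⟨i, rfl⟩) (u i)

theorem phi_append {r₁ r₂ : ℕ} (A₁ : Fin r₁ → M) (A₂ : Fin r₂ → M) (u : Fin r₁ → ℕ)
    (v : Fin r₂ → ℕ) : phi (Fin.append A₁ A₂) (Fin.append u v) = phi A₁ u + phi A₂ v := by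
  simp [phi, Fin.sum_univ_add]

theorem exists_eq_add_single_of_ne_zero {u : Fin r → ℕ} {i : Fin r} (hi : u i ≠ 0) :
    ∃ u', u = u' + (Pi.single i 1 : Fin r → ℕ) :=
  ⟨u - Pi.single i 1, by
    ext j
    by_cases hj : j = i
    · subst hj; simp only [Pi.add_apply, Pi.sub_apply, Pi.single_eq_same]; omega
    · simp [hj]⟩

theorem exists_ne_zero_ne_zero_of_dot_ne_zero {u v : Fin r → ℕ}
    (h : (∑ i, u i * v i) ≠ 0) : ∃ i, u i ≠ 0 ∧ v i ≠ 0 := by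
  obtain ⟨i, -, hi⟩ := Finset.exists_ne_zero_of_sum_ne_zero h
  exact ⟨i, left_ne_zero_of_mul hi, right_ne_zero_of_mul hi⟩

theorem add_ne_of_dot_eq_zero {x z : Fin r → ℕ} (hx : x ≠ 0) (hxz : (∑ i, x i * z i) = 0)
    (t : Fin r → ℕ) : x + t ≠ z := by
  obtain ⟨i, hi⟩ : ∃ i, x i ≠ 0 := Function.ne_iff.mp hx
  have hzi : z i = 0 := by
    have := (Finset.sum_eq_zero_iff.mp hxz) i (Finset.mem_univ i)
    exact (mul_eq_zero.mp this).resolve_left hi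
  intro h
  have hi' := congrFun h i
  simp only [Pi.add_apply, hzi] at hi'
  omega

theorem Fin.append_inj_iff {α : Type*} {m n : ℕ} {u u' : Fin m → α} {v v' : Fin n → α} :
    Fin.append u v = Fin.append u' v' ↔ u = u' ∧ v = v' := by
  refine ⟨fun h => ?_, fun ⟨hu, hv⟩ => hu ▸ hv ▸ rfl⟩
  simpa using (Fin.appendEquiv m n).injective (a₁ := (u, v)) (a₂ := (u', v')) h

theorem Fin.range_subset_range_append_left {α : Type*} {m n : ℕ} (u : Fin m → α)
    (v : Fin n → α) : Set.range u ⊆ Set.range (Fin.append u v) :=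
  fun _ ⟨i, hi⟩ => ⟨_, (Fin.append_left u v i).trans hi⟩

theorem Fin.range_subset_range_append_right {α : Type*} {m n : ℕ} (u : Fin m → α)
    (v : Fin n → α) : Set.range v ⊆ Set.range (Fin.append u v) :=
  fun _ ⟨i, hi⟩ => ⟨_, (Fin.append_right u v i).trans hi⟩

theorem Relation.ReflTransGen.exists_ne_head {α : Type*} {R : α → α → Prop} {a b : α}
    (h : Relation.ReflTransGen R a b) (hab : a ≠ b) : ∃ c, c ≠ a ∧ R a c := by
  induction h using Relation.ReflTransGen.head_induction_on with
  | refl => exact absurd rfl hab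
  | @head a' c hac _ ih =>
    by_cases hca : c = a'
    · subst hca; exact ih hab
    · exact ⟨c, hca, hac⟩

section Betti

variable {M : Type*} [AddCancelCommMonoid M]

theorem exists_isBetti_of_phi_eq (A : Fin r → M) {u v : Fin r → ℕ} (hne : u ≠ v)
    (h : phi A u = phi A v) : ∃ a, IsBetti A a ∧ ∃ t, phi A u = a + phi A t := by
  induction u using WellFoundedLT.induction generalizing v with
  | _ u ih =>
  by_cases hR : Rrel A (phi A u) u v
  · obtain ⟨w, hwu, -, hw, hdot⟩ := hR.exists_ne_head hne
    obtain ⟨i, hui, hwi⟩ := exists_ne_zero_ne_zero_of_dot_ne_zero hdot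
    obtain ⟨u', rfl⟩ := exists_eq_add_single_of_ne_zero hui
    obtain ⟨w', rfl⟩ := exists_eq_add_single_of_ne_zero hwi
    have hphi : phi A u' = phi A w' := by
      simpa only [phi_add, phi_single, add_left_inj] using hw.symm
    have hlt : u' < u' + Pi.single i 1 := lt_add_of_pos_right u' (by simp)
    obtain ⟨a, ha, t, ht⟩ := ih u' hlt (fun h => hwu (by rw [h])) hphi
    exact ⟨a, ha, t + Pi.single i 1, by rw [phi_add, ht, phi_add, add_assoc]⟩
  · exact ⟨_, ⟨u, v, rfl, h.symm, hR⟩, 0, by rw [phi_zero, add_zero]⟩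

end Betti

section Reduced

variable {G : Type*} [AddCommGroup G] {S : AddSubmonoid G}

theorem eq_zero_of_phi_eq_zero (hS : ∀ x ∈ S, -x ∈ S → x = 0) {A : Fin r → G}
    (hAS : Set.range A ⊆ S) (hA0 : 0 ∉ Set.range A) {w : Fin r → ℕ} (hw : phi A w = 0) :
    w = 0 := by
  ext i
  by_contra hi
  obtain ⟨w', rfl⟩ := exists_eq_add_single_of_ne_zero hi
  rw [phi_add, phi_single] at hw
  have hneg : -A i ∈ S := by
    rw [neg_eq_of_add_eq_zero_left hw]
    exact phi_mem hAS w'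
  exact hA0 ⟨i, hS _ (hAS ⟨i, rfl⟩) hneg⟩

theorem IsBetti.ne_zero (hS : ∀ x ∈ S, -x ∈ S → x = 0) {A : Fin r → G}
    (hAS : Set.range A ⊆ S) (hA0 : 0 ∉ Set.range A) {a : G} (ha : IsBetti A a) : a ≠ 0 := by
  rintro rfl
  obtain ⟨u, v, hu, hv, hR⟩ := ha
  rw [eq_zero_of_phi_eq_zero hS hAS hA0 hu, eq_zero_of_phi_eq_zero hS hAS hA0 hv] at hR
  exact hR Relation.ReflTransGen.refl

theorem eq_zero_or_eq_zero_of_add_eq_of_mem_zmultiples (hS : ∀ x ∈ S, -x ∈ S → x = 0)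
    {x y d : G} (hx : x ∈ S) (hy : y ∈ S) (hd : d ∈ S) (hxd : x ∈ AddSubgroup.zmultiples d)
    (h : x + y = d) : x = 0 ∨ y = 0 := by
  obtain ⟨k, rfl⟩ := AddSubgroup.mem_zmultiples_iff.mp hxd
  rcases le_or_gt k 0 with hk | hk
  · refine .inl (hS _ hx ?_)
    rw [← neg_zsmul, ← Int.toNat_of_nonneg (neg_nonneg.mpr hk), natCast_zsmul]
    exact nsmul_mem hd _
  · have hy' : y = (1 - k) • d := by
      rw [eq_sub_of_add_eq' h, sub_zsmul, one_zsmul, sub_eq_add_neg]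
    refine .inr (hS _ hy ?_)
    rw [hy', ← neg_zsmul, neg_sub, ← Int.toNat_of_nonneg (by omega : (0 : ℤ) ≤ k - 1),
      natCast_zsmul]
    exact nsmul_mem hd _

end Reduced

section Group

variable {G : Type*} [AddCommGroup G]

theorem subsingleton_fiber_of_forall_isBetti (A : Fin r → G) {d : G}
    (h : ∀ a, IsBetti A a → d - a ∉ AddSubmonoid.closure (Set.range A)) :
    {u | phi A u = d}.Subsingleton := by
  intro u hu v hv
  by_contra hne
  obtain ⟨a, ha, t, ht⟩ := exists_isBetti_of_phi_eq A hne (hu.trans hv.symm)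
  refine h a ha ((mem_closure_range_iff_exists_phi A _).mpr ⟨t, ?_⟩)
  rw [← hu, ht, add_sub_cancel_left]

theorem HasUniquePres.sub_notMem_closure {A : Fin r → G} {d a : G} (hd : HasUniquePres A d)
    (ha : a ≠ 0) {x y z : Fin r → ℕ} (hx : phi A x = a) (hy : phi A y = a) (hxy : x ≠ y)
    (hz : phi A z = d) (hxz : (∑ i, x i * z i) = 0) (hyz : (∑ i, y i * z i) = 0) :
    d - a ∉ AddSubmonoid.closure (Set.range A) := by
  intro hda
  obtain ⟨t, ht⟩ := (mem_closure_range_iff_exists_phi A _).mp hda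
  obtain ⟨u, v, -, hfib, -⟩ := hd
  have hmem : ∀ w, phi A w = d → w = u ∨ w = v := fun w hw => by
    have hw' : w ∈ ({u, v} : Set (Fin r → ℕ)) := hfib ▸ hw
    simpa using hw'
  have hxt : phi A (x + t) = d := by rw [phi_add, hx, ht, add_sub_cancel]
  have hyt : phi A (y + t) = d := by rw [phi_add, hy, ht, add_sub_cancel]
  have hxt_ne_yt : x + t ≠ y + t := fun h => hxy (add_right_cancel h)
  have hxt_ne_z := add_ne_of_dot_eq_zero (fun h => ha (by rw [← hx, h, phi_zero])) hxz t
  have hyt_ne_z := add_ne_of_dot_eq_zero (fun h => ha (by rw [← hy, h, phi_zero])) hyz t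
  rcases hmem _ hxt with h₁ | h₁ <;> rcases hmem _ hyt with h₂ | h₂ <;>
    rcases hmem _ hz with h₃ | h₃ <;> simp_all

end Group

theorem eq_zero_or_eq_zero_of_phi_add_phi_eq {G : Type*} [AddCommGroup G] {S : AddSubmonoid G}
    (hS : ∀ x ∈ S, -x ∈ S → x = 0) {r₁ r₂ : ℕ} {A₁ : Fin r₁ → G} {A₂ : Fin r₂ → G}
    (h₁ : Set.range A₁ ⊆ S) (h₂ : Set.range A₂ ⊆ S) (h0₁ : 0 ∉ Set.range A₁)
    (h0₂ : 0 ∉ Set.range A₂) {d : G} (hd : d ∈ AddSubmonoid.closure (Set.range A₂))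
    (hglue : AddSubgroup.closure (Set.range A₁) ⊓ AddSubgroup.closure (Set.range A₂)
      ≤ AddSubgroup.zmultiples d)
    {w₁ : Fin r₁ → ℕ} {w₂ : Fin r₂ → ℕ} (h : phi A₁ w₁ + phi A₂ w₂ = d) : w₁ = 0 ∨ w₂ = 0 := by
  have hd' : d ∈ AddSubgroup.closure (Set.range A₂) :=
    AddSubmonoid.closure_le.mpr AddSubgroup.subset_closure hd
  have hglued : phi A₁ w₁ ∈ AddSubgroup.zmultiples d := by
    refine hglue (AddSubgroup.mem_inf.mpr ⟨phi_mem AddSubgroup.subset_closure w₁, ?_⟩)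
    rw [eq_sub_of_add_eq h]
    exact sub_mem hd' (phi_mem AddSubgroup.subset_closure w₂)
  exact (eq_zero_or_eq_zero_of_add_eq_of_mem_zmultiples hS (phi_mem h₁ w₁) (phi_mem h₂ w₂)
    (AddSubmonoid.closure_le.mpr h₂ hd) hglued h).imp
    (eq_zero_of_phi_eq_zero hS h₁ h0₁) (eq_zero_of_phi_eq_zero hS h₂ h0₂)

section Gluing

variable {G : Type*} [AddCommGroup G] {r₁ r₂ : ℕ} {A₁ : Fin r₁ → G} {A₂ : Fin r₂ → G}

local notation "S" => AddSubmonoid.closure (Set.range (Fin.append A₁ A₂))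

theorem HasUniquePres.sub_notMem_closure_of_isBetti_left (hS : ∀ x ∈ S, -x ∈ S → x = 0)
    (hA0 : 0 ∉ Set.range (Fin.append A₁ A₂)) {d a : G}
    (hd : d ∈ AddSubmonoid.closure (Set.range A₂)) (hU : HasUniquePres (Fin.append A₁ A₂) d)
    (ha : IsBetti A₁ a) : d - a ∉ S := by
  have hA₁ := Fin.range_subset_range_append_left A₁ A₂
  obtain ⟨p, hp⟩ := (mem_closure_range_iff_exists_phi A₂ d).mp hd
  obtain ⟨x, y, hx, hy, hR⟩ := id ha
  have hxy : Fin.append x (0 : Fin r₂ → ℕ) ≠ Fin.append y 0 :=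
    fun h => hR ((Fin.append_inj_iff.mp h).1 ▸ .refl)
  exact hU.sub_notMem_closure (ha.ne_zero hS (hA₁.trans AddSubmonoid.subset_closure) (hA0 <| hA₁ ·))
    (by rw [phi_append, hx, phi_zero, add_zero]) (by rw [phi_append, hy, phi_zero, add_zero]) hxy
    (z := Fin.append 0 p) (by rw [phi_append, phi_zero, zero_add, hp])
    (by simp [Fin.sum_univ_add]) (by simp [Fin.sum_univ_add])

theorem HasUniquePres.sub_notMem_closure_of_isBetti_right (hS : ∀ x ∈ S, -x ∈ S → x = 0)
    (hA0 : 0 ∉ Set.range (Fin.append A₁ A₂)) {d a : G}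
    (hd : d ∈ AddSubmonoid.closure (Set.range A₁)) (hU : HasUniquePres (Fin.append A₁ A₂) d)
    (ha : IsBetti A₂ a) : d - a ∉ S := by
  have hA₂ := Fin.range_subset_range_append_right A₁ A₂
  obtain ⟨p, hp⟩ := (mem_closure_range_iff_exists_phi A₁ d).mp hd
  obtain ⟨x, y, hx, hy, hR⟩ := id ha
  have hxy : Fin.append (0 : Fin r₁ → ℕ) x ≠ Fin.append 0 y :=
    fun h => hR ((Fin.append_inj_iff.mp h).2 ▸ .refl)
  exact hU.sub_notMem_closure (ha.ne_zero hS (hA₂.trans AddSubmonoid.subset_closure) (hA0 <| hA₂ ·))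
    (by rw [phi_append, hx, phi_zero, zero_add]) (by rw [phi_append, hy, phi_zero, zero_add]) hxy
    (z := Fin.append p 0) (by rw [phi_append, phi_zero, add_zero, hp])
    (by simp [Fin.sum_univ_add]) (by simp [Fin.sum_univ_add])

theorem hasUniquePres_append_of_forall_isBetti (hS : ∀ x ∈ S, -x ∈ S → x = 0)
    (hA0 : 0 ∉ Set.range (Fin.append A₁ A₂)) {d : G} (hd0 : d ≠ 0)
    (hd₁ : d ∈ AddSubmonoid.closure (Set.range A₁))
    (hd₂ : d ∈ AddSubmonoid.closure (Set.range A₂))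
    (hglue : AddSubgroup.closure (Set.range A₁) ⊓ AddSubgroup.closure (Set.range A₂)
      ≤ AddSubgroup.zmultiples d)
    (hB : ∀ a, IsBetti A₁ a ∨ IsBetti A₂ a → d - a ∉ S) :
    HasUniquePres (Fin.append A₁ A₂) d := by
  have hA₁ := Fin.range_subset_range_append_left A₁ A₂
  have hA₂ := Fin.range_subset_range_append_right A₁ A₂
  have hU₁ := subsingleton_fiber_of_forall_isBetti A₁ fun a ha h =>
    hB a (.inl ha) (AddSubmonoid.closure_mono hA₁ h)
  have hU₂ := subsingleton_fiber_of_forall_isBetti A₂ fun a ha h =>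
    hB a (.inr ha) (AddSubmonoid.closure_mono hA₂ h)
  obtain ⟨p₁, hp₁⟩ := (mem_closure_range_iff_exists_phi A₁ d).mp hd₁
  obtain ⟨p₂, hp₂⟩ := (mem_closure_range_iff_exists_phi A₂ d).mp hd₂
  refine ⟨Fin.append p₁ 0, Fin.append 0 p₂, fun h => ?_, Set.ext fun w => ⟨fun hw => ?_, ?_⟩,
    by simp [Fin.sum_univ_add]⟩
  · rw [← hp₁, (Fin.append_inj_iff.mp h).1, phi_zero] at hd0
    exact hd0 rfl
  · obtain ⟨w₁, w₂, rfl⟩ : ∃ w₁ w₂, w = Fin.append w₁ w₂ :=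
      ⟨_, _, Fin.append_castAdd_natAdd.symm⟩
    replace hw : phi A₁ w₁ + phi A₂ w₂ = d := (phi_append _ _ _ _).symm.trans hw
    rcases eq_zero_or_eq_zero_of_phi_add_phi_eq hS (hA₁.trans AddSubmonoid.subset_closure)
      (hA₂.trans AddSubmonoid.subset_closure) (hA0 <| hA₁ ·) (hA0 <| hA₂ ·) hd₂ hglue hw
      with rfl | rfl
    · rw [phi_zero, zero_add] at hw
      exact .inr (congrArg _ (hU₂ hw hp₂))
    · rw [phi_zero, add_zero] at hw
      exact .inl (congrArg (Fin.append · 0) (hU₁ hw hp₁))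
  · rintro (rfl | rfl)
    · exact (phi_append _ _ _ _).trans (by rw [hp₁, phi_zero, add_zero])
    · exact (phi_append _ _ _ _).trans (by rw [hp₂, phi_zero, zero_add])

end Gluing

theorem stmt8_general {n r₁ r₂ : ℕ} (A₁ : Fin r₁ → (Fin n → ℤ)) (A₂ : Fin r₂ → (Fin n → ℤ))
    (hmin : ∀ i : Fin (r₁ + r₂), ¬ ∃ u : Fin (r₁ + r₂) → ℕ,
      u i = 0 ∧ phi (Fin.append A₁ A₂) u = Fin.append A₁ A₂ i)
    (hred : ∀ x ∈ AddSubmonoid.closure (Set.range (Fin.append A₁ A₂)),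
      -x ∈ AddSubmonoid.closure (Set.range (Fin.append A₁ A₂)) → x = 0)
    (d : Fin n → ℤ) (hd0 : d ≠ 0)
    (hd1 : d ∈ AddSubmonoid.closure (Set.range A₁))
    (hd2 : d ∈ AddSubmonoid.closure (Set.range A₂))
    (hglue : AddSubgroup.closure (Set.range A₁) ⊓ AddSubgroup.closure (Set.range A₂)
      = AddSubgroup.zmultiples d) :
    HasUniquePres (Fin.append A₁ A₂) d ↔
      ∀ a : Fin n → ℤ, (IsBetti A₁ a ∨ IsBetti A₂ a) →
        d - a ∉ AddSubmonoid.closure (Set.range (Fin.append A₁ A₂)) := by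
  have hA0 : 0 ∉ Set.range (Fin.append A₁ A₂) :=
    fun ⟨i, hi⟩ => hmin i ⟨0, rfl, by rw [hi, phi_zero]⟩
  refine ⟨fun hU a ha => ?_, hasUniquePres_append_of_forall_isBetti hred hA0 hd0 hd1 hd2 hglue.le⟩
  rcases ha with ha | ha
  · exact hU.sub_notMem_closure_of_isBetti_left hred hA0 hd2 ha
  · exact hU.sub_notMem_closure_of_isBetti_right hred hA0 hd1 ha

/-- If `S` is the gluing of `S₁` and `S₂` with `G(S₁) ∩ G(S₂) = dℤ`, then `d` has a unique
presentation in `S` iff `d - a ∉ S` for every `a ∈ Betti(S₁) ∪ Betti(S₂)`. -/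
theorem stmt8 {n r₁ r₂ : ℕ} (A₁ : Fin r₁ → (Fin n → ℤ)) (A₂ : Fin r₂ → (Fin n → ℤ))
    (hdisj : Disjoint (Set.range A₁) (Set.range A₂))
    (hmin : ∀ i : Fin (r₁ + r₂), ¬ ∃ u : Fin (r₁ + r₂) → ℕ,
      u i = 0 ∧ phi (Fin.append A₁ A₂) u = Fin.append A₁ A₂ i)
    (hred : ∀ x ∈ AddSubmonoid.closure (Set.range (Fin.append A₁ A₂)),
      -x ∈ AddSubmonoid.closure (Set.range (Fin.append A₁ A₂)) → x = 0)
    (d : Fin n → ℤ) (hd0 : d ≠ 0)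
    (hd1 : d ∈ AddSubmonoid.closure (Set.range A₁))
    (hd2 : d ∈ AddSubmonoid.closure (Set.range A₂))
    (hglue : AddSubgroup.closure (Set.range A₁) ⊓ AddSubgroup.closure (Set.range A₂)
      = AddSubgroup.zmultiples d) :
    HasUniquePres (Fin.append A₁ A₂) d ↔
      ∀ a : Fin n → ℤ, (IsBetti A₁ a ∨ IsBetti A₂ a) →
        d - a ∉ AddSubmonoid.closure (Set.range (Fin.append A₁ A₂)) :=
  stmt8_general A₁ A₂ hmin hred d hd0 hd1 hd2 hglue
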